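/- Fix an integer S ≥ 1. Let a : ℕ → ℝ with a_i ≥ 0 and Σ_{i=0}^{∞} a_i = 1, extended by a_k = 0 for k < 0, and let q : ℕ → ℝ with q_i ≥ 0 and Σ_{i=0}^{∞} q_i = 1 satisfy the balance equations q_j = a_j·(Σ_{i=0}^{S} q_i) + Σ_{i=S+1}^{∞} q_i·a_{j−i+S} for all j ∈ ℕ. Assume furthermore that the sequences (i·a_i) and (i·q_i) are summable. Then Σ_{i=0}^{S−1} (S − i)·q_i = S − Σ_{i=0}^{∞} i·a_i; that is, N(1) = S − E[A] = S(1 − ρ) where ρ = E[A]/S. -/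

import Mathlib

/-- Extension of a sequence on ℕ to ℤ by zero on negative integers. -/
def aext (a : ℕ → ℝ) : ℤ → ℝ := fun k => if 0 ≤ k then a k.toNat else 0

/-!
Multiply the balance equation by `j` and sum over `j`. Since every transition of the queue
from length `i` goes to `max(i, S) - S + A`, exchanging the order of summation (legitimate, all
terms being nonnegative) gives `E[Q] = E[A] + E[(Q - S)⁺]`. As `(Q - S)⁺ = Q - S + (S - Q)⁺`,
the means `E[Q]` cancel and `E[(S - Q)⁺] = N(1)` equals `S - E[A]`.
-/

open Finset

section Stationary

variable {α : Type*} {P : α → α → ℝ} {q w m : α → ℝ} {s : ℝ}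

theorem tsum_mul_eq_of_stationary (hP : ∀ i j, 0 ≤ P i j) (hq : ∀ i, 0 ≤ q i)
    (hw : ∀ j, 0 ≤ w j) (hm : ∀ i, HasSum (fun j => w j * P i j) (m i))
    (hqm : HasSum (fun i => q i * m i) s) (hbal : ∀ j, q j = ∑' i, q i * P i j) :
    ∑' j, w j * q j = s := by
  set F : α → α → ℝ := fun i j => w j * (q i * P i j)
  have hrow : ∀ i, HasSum (F i) (q i * m i) := fun i => by
    simpa only [F, mul_left_comm (w _)] using (hm i).mul_left (q i)
  have hF : Summable (Function.uncurry F) := by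
    refine (summable_prod_of_nonneg fun p => ?_).2
      ⟨fun i => (hrow i).summable,
        by simpa only [Function.uncurry_apply_pair, (hrow _).tsum_eq] using hqm.summable⟩
    exact mul_nonneg (hw _) (mul_nonneg (hq _) (hP _ _))
  calc ∑' j, w j * q j = ∑' j, ∑' i, F i j := by
        simp only [F, tsum_mul_left, ← hbal]
    _ = ∑' i, ∑' j, F i j := hF.tsum_comm
    _ = s := by simp only [(hrow _).tsum_eq, hqm.tsum_eq]

end Stationary

section Aext

variable {a : ℕ → ℝ}

@[simp]
theorem aext_natCast (n : ℕ) : aext a n = a n := by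
  simp [aext]

theorem aext_of_neg {k : ℤ} (hk : k < 0) : aext a k = 0 := by
  simp [aext, not_le.2 hk]

theorem aext_nonneg (ha : ∀ i, 0 ≤ a i) (k : ℤ) : 0 ≤ aext a k := by
  unfold aext; split_ifs
  exacts [ha _, le_rfl]

theorem aext_le_one (ha : ∀ i, 0 ≤ a i) (ha_sum : HasSum a 1) (k : ℤ) : aext a k ≤ 1 := by
  unfold aext; split_ifs
  exacts [le_hasSum ha_sum _ fun j _ => ha j, zero_le_one]

theorem hasSum_mul_aext_sub (ha_sum : HasSum a 1) (ha_mean : Summable fun k : ℕ => (k : ℝ) * a k)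
    (d : ℕ) :
    HasSum (fun j : ℕ => (j : ℝ) * aext a ((j : ℤ) - d)) ((∑' k : ℕ, (k : ℝ) * a k) + d) := by
  have hshift : HasSum (fun k : ℕ => ((k + d : ℕ) : ℝ) * aext a (((k + d : ℕ) : ℤ) - d))
      ((∑' k : ℕ, (k : ℝ) * a k) + d) := by
    convert ha_mean.hasSum.add (ha_sum.mul_left (d : ℝ)) using 1
    · ext k; push_cast; simp only [add_sub_cancel_right, aext_natCast]; ring
    · ring
  have hinit : ∀ j ∈ range d, (j : ℝ) * aext a ((j : ℤ) - d) = 0 := fun j hj => by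
    rw [aext_of_neg (by simp at hj; omega), mul_zero]
  simpa only [sum_eq_zero hinit, add_zero] using
    (hasSum_nat_add_iff (f := fun j : ℕ => (j : ℝ) * aext a ((j : ℤ) - d)) d).1 hshift

end Aext

/-- The law of the next queue length `max(i, S) - S + A` from length `i`; note that `i - S`
is truncated subtraction. -/
def queueKernel (a : ℕ → ℝ) (S i j : ℕ) : ℝ := aext a ((j : ℤ) - (i - S : ℕ))

section QueueKernel

variable {a : ℕ → ℝ} {S : ℕ}

theorem queueKernel_of_le {i : ℕ} (hi : i ≤ S) (j : ℕ) : queueKernel a S i j = a j := by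
  simp [queueKernel, Nat.sub_eq_zero_of_le hi]

theorem queueKernel_of_lt {i : ℕ} (hi : S < i) (j : ℕ) :
    queueKernel a S i j = aext a ((j : ℤ) - i + S) := by
  rw [queueKernel, Nat.cast_sub hi.le, sub_sub_eq_add_sub, add_sub_right_comm]

theorem eq_tsum_mul_queueKernel (ha : ∀ i, 0 ≤ a i) (ha_sum : HasSum a 1)
    {q : ℕ → ℝ} (hq : ∀ i, 0 ≤ q i) (hq_sum : HasSum q 1) {j : ℕ}
    (hbal : q j = a j * (∑ i ∈ range (S + 1), q i) +
      ∑' i : ℕ, if S + 1 ≤ i then q i * aext a ((j : ℤ) - (i : ℤ) + (S : ℤ)) else 0) :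
    q j = ∑' i, q i * queueKernel a S i j := by
  have hsummable : Summable fun i => q i * queueKernel a S i j :=
    hq_sum.summable.of_nonneg_of_le (fun i => mul_nonneg (hq i) (aext_nonneg ha _))
      fun i => mul_le_of_le_one_right (hq i) (aext_le_one ha ha_sum _)
  rw [← hsummable.sum_add_tsum_compl (s := range (S + 1)),
    _root_.tsum_subtype _ fun i => q i * queueKernel a S i j, hbal, mul_sum]
  congr 1
  · refine sum_congr rfl fun i hi => ?_
    rw [queueKernel_of_le (by simp at hi; omega), mul_comm]
  · refine tsum_congr fun i => ?_
    by_cases hi : S + 1 ≤ i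
    · rw [if_pos hi, Set.indicator_of_mem (by simp; omega), queueKernel_of_lt hi]
    · rw [if_neg hi, Set.indicator_of_notMem (by simp; omega)]

end QueueKernel

theorem hasSum_mul_cast_sub_left (q : ℕ → ℝ) (S : ℕ) :
    HasSum (fun i => q i * ((S - i : ℕ) : ℝ)) (∑ i ∈ range S, ((S : ℝ) - i) * q i) := by
  have hfinite : ∀ i ∉ range S, q i * ((S - i : ℕ) : ℝ) = 0 := fun i hi => by
    rw [Nat.sub_eq_zero_of_le (by simpa using hi), Nat.cast_zero, mul_zero]
  convert (hasSum_sum_of_ne_finset_zero hfinite : HasSum _ _) using 1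
  refine sum_congr rfl fun i hi => ?_
  rw [Nat.cast_sub (by simp at hi; omega), mul_comm]

theorem hasSum_mul_cast_sub_right {q : ℕ → ℝ} (hq_sum : HasSum q 1)
    (hq_mean : Summable fun i : ℕ => (i : ℝ) * q i) (S : ℕ) :
    HasSum (fun i => q i * ((i - S : ℕ) : ℝ))
      ((∑' i : ℕ, (i : ℝ) * q i) - S + ∑ i ∈ range S, ((S : ℝ) - i) * q i) := by
  have hsplit : (fun i => q i * ((i - S : ℕ) : ℝ)) =
      fun i => (i * q i - S * q i) + q i * ((S - i : ℕ) : ℝ) := funext fun i => by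
    rcases le_total i S with hi | hi
    · rw [Nat.sub_eq_zero_of_le hi, Nat.cast_sub hi]; push_cast; ring
    · rw [Nat.sub_eq_zero_of_le hi, Nat.cast_sub hi]; push_cast; ring
  rw [hsplit]
  simpa only [mul_one] using
    (hq_mean.hasSum.sub (hq_sum.mul_left (S : ℝ))).add (hasSum_mul_cast_sub_left q S)

theorem N_one_eq_S_sub_mean_general
    (S : ℕ)
    (a : ℕ → ℝ) (ha_nonneg : ∀ i, 0 ≤ a i) (ha_sum : HasSum a 1)
    (q : ℕ → ℝ) (hq_nonneg : ∀ i, 0 ≤ q i) (hq_sum : HasSum q 1)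
    (h_balance : ∀ j : ℕ,
      q j = a j * (∑ i ∈ Finset.range (S + 1), q i) +
        ∑' i : ℕ, if S + 1 ≤ i then q i * aext a ((j : ℤ) - (i : ℤ) + (S : ℤ)) else 0)
    (ha_mean : Summable (fun i : ℕ => (i : ℝ) * a i))
    (hq_mean : Summable (fun i : ℕ => (i : ℝ) * q i)) :
    ∑ i ∈ Finset.range S, ((S : ℝ) - (i : ℝ)) * q i = (S : ℝ) - ∑' i : ℕ, (i : ℝ) * a i := by
  set EA := ∑' i : ℕ, (i : ℝ) * a i
  set EQ := ∑' i : ℕ, (i : ℝ) * q i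
  set N := ∑ i ∈ Finset.range S, ((S : ℝ) - (i : ℝ)) * q i
  have hmeanOfRows : HasSum (fun i => q i * (EA + (i - S : ℕ))) (EA + (EQ - S + N)) := by
    simpa only [mul_add, mul_comm (q _) EA, mul_one] using
      (hq_sum.mul_left EA).add (hasSum_mul_cast_sub_right hq_sum hq_mean S)
  have hmean : EQ = EA + (EQ - S + N) := tsum_mul_eq_of_stationary
    (fun i j => aext_nonneg ha_nonneg _) hq_nonneg (fun j => Nat.cast_nonneg j)
    (fun i => hasSum_mul_aext_sub ha_sum ha_mean (i - S)) hmeanOfRows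
    fun j => eq_tsum_mul_queueKernel ha_nonneg ha_sum hq_nonneg hq_sum (h_balance j)
  linarith

/-- If q is a stationary distribution of the queue recursion and the means
exist, then N(1) = Σ_{i=0}^{S−1} (S − i) q_i = S − E[A]. -/
theorem N_one_eq_S_sub_mean
    (S : ℕ) (hS : 1 ≤ S)
    (a : ℕ → ℝ) (ha_nonneg : ∀ i, 0 ≤ a i) (ha_sum : HasSum a 1)
    (q : ℕ → ℝ) (hq_nonneg : ∀ i, 0 ≤ q i) (hq_sum : HasSum q 1)
    (h_balance : ∀ j : ℕ,
      q j = a j * (∑ i ∈ Finset.range (S + 1), q i) +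
        ∑' i : ℕ, if S + 1 ≤ i then q i * aext a ((j : ℤ) - (i : ℤ) + (S : ℤ)) else 0)
    (ha_mean : Summable (fun i : ℕ => (i : ℝ) * a i))
    (hq_mean : Summable (fun i : ℕ => (i : ℝ) * q i)) :
    ∑ i ∈ Finset.range S, ((S : ℝ) - (i : ℝ)) * q i = (S : ℝ) - ∑' i : ℕ, (i : ℝ) * a i :=
  N_one_eq_S_sub_mean_general S a ha_nonneg ha_sum q hq_nonneg hq_sum h_balance ha_mean hq_mean
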